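/- Let n ≥ 2. There exists ε₀ ∈ (0,1] such that for every 0 < ε < ε₀ the body K_ε is convex. -/

import Mathlib

/-- The body `K_ε = {x : |x|³ + ε x_n³ ≤ 1}`, with the last-coordinate index
passed as a parameter `i`. -/
def Keps (n : ℕ) (ε : ℝ) (i : Fin n) : Set (EuclideanSpace ℝ (Fin n)) :=
  {x | ‖x‖ ^ 3 + ε * (x i) ^ 3 ≤ 1}

/-!
Write `f x = ‖x‖³ + ε ℓ(x)³` with `|ℓ x| ≤ ‖x‖`, and let `z = a • x + b • y` be a convex
combination of two points of `{f ≤ 1}`. The tangent line of `s ↦ s^(3/2)` at `s = ‖z‖²`, together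
with `‖z‖² = a‖x‖² + b‖y‖² - ab‖x - y‖²`, shows that `‖·‖³` gains `(3/2)‖z‖ · ab‖x - y‖²` over its
chord. Points of the body have norm at most `2`, and on `[-2, 2]` the cube falls short of convexity
by at most `6 · ab(ℓ x - ℓ y)²`. Hence `f z ≤ a f x + b f y ≤ 1` once `‖z‖ ≥ 1/2` and `6|ε| ≤ 3/4`,
while for `‖z‖ ≤ 1/2` simply `f z ≤ (1 + |ε|)/8 ≤ 1`.
-/

lemma pow_three_add_mul_sq_sub_sq_le {u w : ℝ} (hu : 0 ≤ u) (hw : 0 ≤ w) :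
    w ^ 3 + 3 / 2 * w * (u ^ 2 - w ^ 2) ≤ u ^ 3 := by
  nlinarith [mul_nonneg (sq_nonneg (u - w)) (by positivity : 0 ≤ u + w / 2)]

lemma abs_mul_add_mul_pow_three_sub_le {a b s t M : ℝ} (ha : 0 ≤ a) (hb : 0 ≤ b)
    (hab : a + b = 1) (hs : |s| ≤ M) (ht : |t| ≤ M) :
    |(a * s + b * t) ^ 3 - (a * s ^ 3 + b * t ^ 3)| ≤ 3 * M * (a * b * (s - t) ^ 2) := by
  obtain rfl : b = 1 - a := by linarith
  have hdefect : (a * s + (1 - a) * t) ^ 3 - (a * s ^ 3 + (1 - a) * t ^ 3)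
      = -(a * (1 - a) * (s - t) ^ 2 * ((1 + a) * s + (2 - a) * t)) := by ring
  have hbound : |(1 + a) * s + (2 - a) * t| ≤ 3 * M := by
    rw [abs_le] at hs ht ⊢
    constructor <;> nlinarith
  rw [hdefect, abs_neg, abs_mul, abs_of_nonneg (by positivity), mul_comm]
  gcongr

lemma abs_mul_pow_three_le {c r : ℝ} (h : |c| ≤ r) (ε : ℝ) : |ε * c ^ 3| ≤ |ε| * r ^ 3 := by
  rw [abs_mul, abs_pow]
  gcongr

section

variable {E : Type*} [NormedAddCommGroup E] [InnerProductSpace ℝ E]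

lemma norm_smul_add_smul_sq (x y : E) {a b : ℝ} (hab : a + b = 1) :
    ‖a • x + b • y‖ ^ 2 = a * ‖x‖ ^ 2 + b * ‖y‖ ^ 2 - a * b * ‖x - y‖ ^ 2 := by
  obtain rfl : b = 1 - a := by linarith
  rw [← real_inner_self_eq_norm_sq, ← real_inner_self_eq_norm_sq, ← real_inner_self_eq_norm_sq,
    ← real_inner_self_eq_norm_sq]
  simp only [inner_add_left, inner_add_right, inner_sub_left, inner_sub_right, real_inner_smul_left,
    real_inner_smul_right, real_inner_comm x y]
  ring

lemma norm_smul_add_smul_pow_three_add_le (x y : E) {a b : ℝ} (ha : 0 ≤ a) (hb : 0 ≤ b)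
    (hab : a + b = 1) :
    ‖a • x + b • y‖ ^ 3 + 3 / 2 * ‖a • x + b • y‖ * (a * b * ‖x - y‖ ^ 2)
      ≤ a * ‖x‖ ^ 3 + b * ‖y‖ ^ 3 := by
  have hx := pow_three_add_mul_sq_sub_sq_le (norm_nonneg x) (norm_nonneg (a • x + b • y))
  have hy := pow_three_add_mul_sq_sub_sq_le (norm_nonneg y) (norm_nonneg (a • x + b • y))
  have hsq := norm_smul_add_smul_sq x y hab
  have hsplit : a * b * ‖x - y‖ ^ 2
      = a * (‖x‖ ^ 2 - ‖a • x + b • y‖ ^ 2) + b * (‖y‖ ^ 2 - ‖a • x + b • y‖ ^ 2) := by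
    linear_combination hsq + ‖a • x + b • y‖ ^ 2 * hab
  rw [hsplit]
  linear_combination a * hx + b * hy - ‖a • x + b • y‖ ^ 3 * hab

variable (ℓ : E →ₗ[ℝ] ℝ)

lemma norm_le_two_of_pow_three_add_mul_pow_three_le (hℓ : ∀ x, |ℓ x| ≤ ‖x‖) {ε : ℝ}
    (hε : |ε| ≤ 1 / 2) {x : E} (hx : ‖x‖ ^ 3 + ε * ℓ x ^ 3 ≤ 1) : ‖x‖ ≤ 2 := by
  have hεx := neg_le_of_abs_le (abs_mul_pow_three_le (hℓ x) ε)
  have : ‖x‖ ^ 3 ≤ 2 ^ 3 := by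
    nlinarith [mul_le_mul_of_nonneg_right hε (pow_nonneg (norm_nonneg x) 3)]
  exact (pow_le_pow_iff_left₀ (norm_nonneg x) zero_le_two three_ne_zero).1 this

lemma mul_pow_three_apply_smul_add_smul_le (hℓ : ∀ x, |ℓ x| ≤ ‖x‖) {ε : ℝ} (hε : |ε| ≤ 1 / 8)
    {x y : E} (hx : ‖x‖ ≤ 2) (hy : ‖y‖ ≤ 2) {a b : ℝ} (ha : 0 ≤ a) (hb : 0 ≤ b)
    (hab : a + b = 1) :
    ε * ℓ (a • x + b • y) ^ 3
      ≤ a * (ε * ℓ x ^ 3) + b * (ε * ℓ y ^ 3) + 3 / 4 * (a * b * ‖x - y‖ ^ 2) := by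
  have hdist : (ℓ x - ℓ y) ^ 2 ≤ ‖x - y‖ ^ 2 := by
    rw [sq_le_sq, abs_norm, ← map_sub]
    exact hℓ (x - y)
  have hdefect : |(a * ℓ x + b * ℓ y) ^ 3 - (a * ℓ x ^ 3 + b * ℓ y ^ 3)|
      ≤ 3 * 2 * (a * b * (ℓ x - ℓ y) ^ 2) :=
    abs_mul_add_mul_pow_three_sub_le ha hb hab ((hℓ x).trans hx) ((hℓ y).trans hy)
  calc ε * ℓ (a • x + b • y) ^ 3 = ε * (a * ℓ x ^ 3 + b * ℓ y ^ 3)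
        + ε * ((a * ℓ x + b * ℓ y) ^ 3 - (a * ℓ x ^ 3 + b * ℓ y ^ 3)) := by
          simp only [map_add, map_smul, smul_eq_mul]; ring
    _ ≤ ε * (a * ℓ x ^ 3 + b * ℓ y ^ 3) + 1 / 8 * (3 * 2 * (a * b * (ℓ x - ℓ y) ^ 2)) := by
        gcongr ε * (a * ℓ x ^ 3 + b * ℓ y ^ 3) + ?_
        exact (le_abs_self _).trans
          ((abs_mul _ _).trans_le (mul_le_mul hε hdefect (abs_nonneg _) (by norm_num)))
    _ ≤ a * (ε * ℓ x ^ 3) + b * (ε * ℓ y ^ 3) + 3 / 4 * (a * b * ‖x - y‖ ^ 2) := by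
        nlinarith [mul_le_mul_of_nonneg_left hdist (mul_nonneg ha hb)]

theorem convex_setOf_norm_pow_three_add_mul_pow_three_le (hℓ : ∀ x, |ℓ x| ≤ ‖x‖) {ε : ℝ}
    (hε : |ε| ≤ 1 / 8) :
    Convex ℝ {x : E | ‖x‖ ^ 3 + ε * ℓ x ^ 3 ≤ 1} := by
  intro x hx y hy a b ha hb hab
  simp only [Set.mem_ofPred_eq] at hx hy ⊢
  set z := a • x + b • y
  rcases le_or_gt ‖z‖ (1 / 2) with hsmall | hlarge
  · calc ‖z‖ ^ 3 + ε * ℓ z ^ 3 ≤ (1 + |ε|) * ‖z‖ ^ 3 := by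
          linarith [le_abs_self (ε * ℓ z ^ 3), abs_mul_pow_three_le (hℓ z) ε]
      _ ≤ (1 + 1 / 8) * (1 / 2) ^ 3 := by gcongr
      _ ≤ 1 := by norm_num
  · have hnorm := norm_smul_add_smul_pow_three_add_le x y ha hb hab
    have hcoord := mul_pow_three_apply_smul_add_smul_le ℓ hℓ hε
      (norm_le_two_of_pow_three_add_mul_pow_three_le ℓ hℓ (by linarith) hx)
      (norm_le_two_of_pow_three_add_mul_pow_three_le ℓ hℓ (by linarith) hy) ha hb hab
    have hgain : 3 / 4 * (a * b * ‖x - y‖ ^ 2) ≤ 3 / 2 * ‖z‖ * (a * b * ‖x - y‖ ^ 2) := by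
      gcongr
      linarith
    calc ‖z‖ ^ 3 + ε * ℓ z ^ 3 ≤ a * (‖x‖ ^ 3 + ε * ℓ x ^ 3) + b * (‖y‖ ^ 3 + ε * ℓ y ^ 3) := by
          linarith
      _ ≤ a * 1 + b * 1 := by gcongr
      _ = 1 := by rw [mul_one, mul_one, hab]

end

/-- There is `ε₀ ∈ (0,1]` such that `K_ε` is convex for all `0 < ε < ε₀`. -/
theorem stmt4 (n : ℕ) (hn : 2 ≤ n) :
    ∃ ε₀ : ℝ, 0 < ε₀ ∧ ε₀ ≤ 1 ∧
      ∀ ε : ℝ, 0 < ε → ε < ε₀ → Convex ℝ (Keps n ε ⟨n - 1, by omega⟩) := by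
  refine ⟨1 / 8, by norm_num, by norm_num, fun ε hε hε₀ => ?_⟩
  have hproj (x : EuclideanSpace ℝ (Fin n)) (i : Fin n) : |EuclideanSpace.projₗ i x| ≤ ‖x‖ := by
    simpa using PiLp.norm_apply_le x i
  exact convex_setOf_norm_pow_three_add_mul_pow_three_le _ (hproj · _)
    (abs_le.2 ⟨by linarith, hε₀.le⟩)
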